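/- arXiv:math/0410551 — 3 statements merged into one kernel-verified Lean document; each statement's English description precedes it below -/
import Mathlib

section
/- First variation identity (the computational core of the Euler–Lagrange theorem): for every smooth σ : ℝ^r × ℝ^m → ℝ^k and every x ∈ ℝ^r, Σ_{α,A} σ^α(x,u(x)) ρ_α^A(x,u(x)) (∂L/∂u^A)(j(x)) + Σ_{a,α} ( σ^α_{|a}(x) + Σ_β Z^α_{aβ}(j(x)) σ^β(x,u(x)) ) p_a^α(x) = − Σ_α σ^α(x,u(x)) δL_α(x) + Σ_a ∂/∂x^a ( Σ_α σ^α(x,u(x)) p_a^α(x) ), where σ^α_{|a}(x) = (∂σ^α/∂x^a)(x,u(x)) + Σ_A ( ρ_a^A(x,u(x)) + Σ_β ρ_β^A(x,u(x)) y_a^β(x) ) (∂σ^α/∂u^A)(x,u(x)) and δL_α(x) = Σ_a ∂/∂x^a p_a^α(x) − Σ_{a,γ} Z^γ_{aα}(j(x)) p_a^γ(x) − Σ_A ρ_α^A(x,u(x)) (∂L/∂u^A)(j(x)). -/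
/-- Partial derivative of a scalar function on `ℝ^n` in the `i`-th coordinate
direction. -/
noncomputable def pd {n : ℕ} (f : (Fin n → ℝ) → ℝ) (x : Fin n → ℝ) (i : Fin n) : ℝ :=
  fderiv ℝ f x (Pi.single i 1)

/-- Partial derivative of a scalar function of the jet variables
`y = (y_a^α) ∈ ℝ^{r·k}` in the direction of the coordinate `y_a^α`. -/
noncomputable def pdY {r k : ℕ} (f : (Fin r → Fin k → ℝ) → ℝ) (w : Fin r → Fin k → ℝ)
    (a : Fin r) (α : Fin k) : ℝ :=
  fderiv ℝ f w (Pi.single a (Pi.single α 1))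

/-- The affine structure functions `Z^α_{aβ}(x,u,y) = C^α_{aβ}(x,u) + Σ_γ C^α_{γβ}(x,u) y_a^γ`.
Here `Ca a α β = C^α_{aβ}` and `Cc α γ β = C^α_{γβ}`. -/
def Zaff {r m k : ℕ} (Ca : Fin r → Fin k → Fin k → (Fin r → ℝ) → (Fin m → ℝ) → ℝ)
    (Cc : Fin k → Fin k → Fin k → (Fin r → ℝ) → (Fin m → ℝ) → ℝ)
    (a : Fin r) (α β : Fin k) (x : Fin r → ℝ) (uu : Fin m → ℝ) (yy : Fin r → Fin k → ℝ) : ℝ :=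
  Ca a α β x uu + ∑ γ, Cc α γ β x uu * yy a γ

/-- The momenta `p_a^α(x) = (∂L/∂y_a^α)(x, u(x), y(x))`. -/
noncomputable def momentum {r m k : ℕ}
    (L : (Fin r → ℝ) → (Fin m → ℝ) → (Fin r → Fin k → ℝ) → ℝ)
    (u : (Fin r → ℝ) → Fin m → ℝ) (y : (Fin r → ℝ) → Fin r → Fin k → ℝ)
    (a : Fin r) (α : Fin k) (x : Fin r → ℝ) : ℝ :=
  pdY (fun w => L x (u x) w) (y x) a α

/-- `(∂L/∂u^A)(x, u(x), y(x))`. -/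
noncomputable def Lu {r m k : ℕ}
    (L : (Fin r → ℝ) → (Fin m → ℝ) → (Fin r → Fin k → ℝ) → ℝ)
    (u : (Fin r → ℝ) → Fin m → ℝ) (y : (Fin r → ℝ) → Fin r → Fin k → ℝ)
    (A : Fin m) (x : Fin r → ℝ) : ℝ :=
  pd (fun v => L x v (y x)) (u x) A

/-- The total derivative
`σ^α_{|a}(x) = (∂σ^α/∂x^a)(x,u(x)) + Σ_A (ρ_a^A(x,u(x)) + Σ_β ρ_β^A(x,u(x)) y_a^β(x)) (∂σ^α/∂u^A)(x,u(x))`. -/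
noncomputable def sigmaTD {r m k : ℕ}
    (ρa : Fin r → Fin m → (Fin r → ℝ) → (Fin m → ℝ) → ℝ)
    (ρk : Fin k → Fin m → (Fin r → ℝ) → (Fin m → ℝ) → ℝ)
    (σ : (Fin r → ℝ) → (Fin m → ℝ) → Fin k → ℝ)
    (u : (Fin r → ℝ) → Fin m → ℝ) (y : (Fin r → ℝ) → Fin r → Fin k → ℝ)
    (a : Fin r) (α : Fin k) (x : Fin r → ℝ) : ℝ :=
  pd (fun x' => σ x' (u x) α) x a
  + ∑ A, (ρa a A x (u x) + ∑ β, ρk β A x (u x) * y x a β) * pd (fun v => σ x v α) (u x) A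

/-- The Euler–Lagrange expression
`δL_α(x) = Σ_a ∂/∂x^a p_a^α(x) − Σ_{a,γ} Z^γ_{aα}(j(x)) p_a^γ(x) − Σ_A ρ_α^A(x,u(x)) (∂L/∂u^A)(j(x))`. -/
noncomputable def deltaL {r m k : ℕ}
    (ρk : Fin k → Fin m → (Fin r → ℝ) → (Fin m → ℝ) → ℝ)
    (Ca : Fin r → Fin k → Fin k → (Fin r → ℝ) → (Fin m → ℝ) → ℝ)
    (Cc : Fin k → Fin k → Fin k → (Fin r → ℝ) → (Fin m → ℝ) → ℝ)
    (L : (Fin r → ℝ) → (Fin m → ℝ) → (Fin r → Fin k → ℝ) → ℝ)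
    (u : (Fin r → ℝ) → Fin m → ℝ) (y : (Fin r → ℝ) → Fin r → Fin k → ℝ)
    (α : Fin k) (x : Fin r → ℝ) : ℝ :=
  (∑ a, pd (fun x' => momentum L u y a α x') x a)
  - (∑ a, ∑ γ, Zaff Ca Cc a γ α x (u x) (y x) * momentum L u y a γ x)
  - ∑ A, ρk α A x (u x) * Lu L u y A x

open ContinuousLinearMap in
/-- Momentum as the full-jet derivative of `L` evaluated on a coordinate vector. -/
lemma momentum_eq_fderiv {r m k : ℕ}
    (L : (Fin r → ℝ) → (Fin m → ℝ) → (Fin r → Fin k → ℝ) → ℝ)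
    (hL : ContDiff ℝ (⊤ : ℕ∞)
      (fun q : (Fin r → ℝ) × (Fin m → ℝ) × (Fin r → Fin k → ℝ) => L q.1 q.2.1 q.2.2))
    (u : (Fin r → ℝ) → Fin m → ℝ) (y : (Fin r → ℝ) → Fin r → Fin k → ℝ)
    (a : Fin r) (α : Fin k) (x : Fin r → ℝ) :
    momentum L u y a α x
      = fderiv ℝ (fun q : (Fin r → ℝ) × (Fin m → ℝ) × (Fin r → Fin k → ℝ) => L q.1 q.2.1 q.2.2)
          (x, u x, y x) (0, 0, Pi.single a (Pi.single α 1)) := by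
  classical
  set Lf := fun q : (Fin r → ℝ) × (Fin m → ℝ) × (Fin r → Fin k → ℝ) => L q.1 q.2.1 q.2.2 with hLf
  set J : (Fin r → Fin k → ℝ) →L[ℝ] (Fin r → ℝ) × (Fin m → ℝ) × (Fin r → Fin k → ℝ) :=
    (inr ℝ (Fin r → ℝ) ((Fin m → ℝ) × (Fin r → Fin k → ℝ))).comp
      (inr ℝ (Fin m → ℝ) (Fin r → Fin k → ℝ)) with hJ
  have hg : HasFDerivAt (fun w : Fin r → Fin k → ℝ => ((x, u x, w) :
      (Fin r → ℝ) × (Fin m → ℝ) × (Fin r → Fin k → ℝ))) J (y x) := by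
    have h0 : (fun w : Fin r → Fin k → ℝ =>
        (((x, u x, 0) : (Fin r → ℝ) × (Fin m → ℝ) × (Fin r → Fin k → ℝ)) + J w))
        = fun w => (x, u x, w) := by
      funext w
      simp [hJ, Prod.ext_iff]
    rw [← h0]
    exact J.hasFDerivAt.const_add _
  have hcomp : HasFDerivAt (fun w => L x (u x) w)
      ((fderiv ℝ Lf (x, u x, y x)).comp J) (y x) :=
    by have h := ((hL.differentiable (by simp) (x, u x, y x)).hasFDerivAt).comp (y x) hg; exact h
  have := hcomp.fderiv
  simp only [momentum, pdY, this, ContinuousLinearMap.comp_apply]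
  rfl

/-- The momenta are smooth functions of `x`. -/
lemma momentum_contDiff {r m k : ℕ}
    (L : (Fin r → ℝ) → (Fin m → ℝ) → (Fin r → Fin k → ℝ) → ℝ)
    (hL : ContDiff ℝ (⊤ : ℕ∞)
      (fun q : (Fin r → ℝ) × (Fin m → ℝ) × (Fin r → Fin k → ℝ) => L q.1 q.2.1 q.2.2))
    (u : (Fin r → ℝ) → Fin m → ℝ) (y : (Fin r → ℝ) → Fin r → Fin k → ℝ)
    (hu : ContDiff ℝ (⊤ : ℕ∞) u) (hy : ContDiff ℝ (⊤ : ℕ∞) y) (a : Fin r) (α : Fin k) :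
    ContDiff ℝ (⊤ : ℕ∞) (fun x => momentum L u y a α x) := by
  have heq : (fun x => momentum L u y a α x)
      = fun x => fderiv ℝ
          (fun q : (Fin r → ℝ) × (Fin m → ℝ) × (Fin r → Fin k → ℝ) => L q.1 q.2.1 q.2.2)
          (x, u x, y x) (0, 0, Pi.single a (Pi.single α 1)) :=
    funext fun x => momentum_eq_fderiv L hL u y a α x
  rw [heq]
  have h1 : ContDiff ℝ (⊤ : ℕ∞) (fderiv ℝ
      (fun q : (Fin r → ℝ) × (Fin m → ℝ) × (Fin r → Fin k → ℝ) => L q.1 q.2.1 q.2.2)) :=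
    hL.fderiv_right (by simp)
  have h2 : ContDiff ℝ (⊤ : ℕ∞) (fun x : Fin r → ℝ =>
      ((x, u x, y x) : (Fin r → ℝ) × (Fin m → ℝ) × (Fin r → Fin k → ℝ))) :=
    contDiff_id.prodMk (hu.prodMk hy)
  exact (h1.comp h2).clm_apply contDiff_const

/-- `pd` of a finite sum of products (Leibniz rule). -/
lemma pd_sum_mul {n : ℕ} {ι : Type*} [Fintype ι] (f g : ι → (Fin n → ℝ) → ℝ)
    (x : Fin n → ℝ) (i : Fin n)
    (hf : ∀ j, DifferentiableAt ℝ (f j) x) (hg : ∀ j, DifferentiableAt ℝ (g j) x) :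
    pd (fun x' => ∑ j, f j x' * g j x') x i
      = ∑ j, (pd (f j) x i * g j x + f j x * pd (g j) x i) := by
  classical
  have h : HasFDerivAt (fun x' => ∑ j, f j x' * g j x')
      (∑ j, (f j x • fderiv ℝ (g j) x + g j x • fderiv ℝ (f j) x)) x :=
    HasFDerivAt.fun_sum fun j _ => ((hf j).hasFDerivAt.mul (hg j).hasFDerivAt)
  simp only [pd, h.fderiv, ContinuousLinearMap.coe_sum', Finset.sum_apply,
    ContinuousLinearMap.add_apply, ContinuousLinearMap.smul_apply, smul_eq_mul]
  refine Finset.sum_congr rfl fun j _ => by ring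

open ContinuousLinearMap in
/-- Chain rule in coordinates for a function of `(x, u(x))`. -/
lemma pd_comp_chain {r m : ℕ} (G : (Fin r → ℝ) × (Fin m → ℝ) → ℝ)
    (hG : ContDiff ℝ (⊤ : ℕ∞) G) (u : (Fin r → ℝ) → Fin m → ℝ) (hu : ContDiff ℝ (⊤ : ℕ∞) u)
    (x : Fin r → ℝ) (a : Fin r) :
    pd (fun x' => G (x', u x')) x a
      = pd (fun x' => G (x', u x)) x a
        + ∑ A, pd (fun x' => u x' A) x a * pd (fun v => G (x, v)) (u x) A := by
  classical
  have hGd : DifferentiableAt ℝ G (x, u x) := hG.differentiable (by simp) _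
  have hud : HasFDerivAt u (fderiv ℝ u x) x := (hu.differentiable (by simp) x).hasFDerivAt
  set D := fderiv ℝ G (x, u x) with hD
  -- derivative of the composite
  have hφ : HasFDerivAt (fun x' => (x', u x'))
      ((ContinuousLinearMap.id ℝ (Fin r → ℝ)).prod (fderiv ℝ u x)) x :=
    (hasFDerivAt_id x).prodMk hud
  have hcomp : HasFDerivAt (fun x' => G (x', u x'))
      (D.comp ((ContinuousLinearMap.id ℝ (Fin r → ℝ)).prod (fderiv ℝ u x))) x :=
    hGd.hasFDerivAt.comp x hφ
  -- partial in x' at fixed second slot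
  have hxslot : HasFDerivAt (fun x' => G (x', u x))
      (D.comp (inl ℝ (Fin r → ℝ) (Fin m → ℝ))) x :=
    hGd.hasFDerivAt.comp x (hasFDerivAt_prodMk_left x (u x))
  -- partial in v at fixed first slot
  have hvslot : HasFDerivAt (fun v => G (x, v))
      (D.comp (inr ℝ (Fin r → ℝ) (Fin m → ℝ))) (u x) :=
    hGd.hasFDerivAt.comp (u x) (hasFDerivAt_prodMk_right x (u x))
  -- coordinates of the derivative of u
  have hucoord : ∀ A : Fin m, pd (fun x' => u x' A) x a = fderiv ℝ u x (Pi.single a 1) A := by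
    intro A
    have := hasFDerivAt_pi'.1 hud A
    simp [pd, this.fderiv]
  set w := fderiv ℝ u x (Pi.single a 1) with hw
  have hwsum : (Pi.single a 1, w) = ((Pi.single a 1, 0) : (Fin r → ℝ) × (Fin m → ℝ))
      + ∑ A, (w A) • ((0 : Fin r → ℝ), (Pi.single A 1 : Fin m → ℝ)) := by
    have : ∑ A, (w A) • ((0 : Fin r → ℝ), (Pi.single A 1 : Fin m → ℝ))
        = ((0 : Fin r → ℝ), w) := by
      rw [Prod.ext_iff]
      constructor
      · simp [Prod.fst_sum]
      · simp only [Prod.snd_sum, Prod.smul_mk, Prod.mk.injEq]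
        calc ∑ A, w A • (Pi.single A 1 : Fin m → ℝ) = ∑ A, Pi.single A (w A) := by
              refine Finset.sum_congr rfl fun A _ => ?_
              funext B
              by_cases h : A = B <;> simp [Pi.single_apply, h]
          _ = w := Finset.univ_sum_single w
    rw [this]
    simp
  calc pd (fun x' => G (x', u x')) x a = D (Pi.single a 1, w) := by
        simp [pd, hcomp.fderiv, hw]
    _ = D (Pi.single a 1, 0) + ∑ A, w A * D (0, Pi.single A 1) := by
        rw [hwsum, map_add, map_sum]
        congr 1
        refine Finset.sum_congr rfl fun A _ => ?_
        rw [Prod.smul_mk, ← Prod.smul_mk, map_smul, smul_eq_mul]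
    _ = pd (fun x' => G (x', u x)) x a
        + ∑ A, pd (fun x' => u x' A) x a * pd (fun v => G (x, v)) (u x) A := by
        congr 1
        · simp [pd, hxslot.fderiv]
        · refine Finset.sum_congr rfl fun A _ => ?_
          rw [hucoord A]
          congr 1
          simp [pd, hvslot.fderiv]

/-- The purely algebraic rearrangement underlying the first variation identity. -/
lemma alg_identity {r k m' : ℕ} (s : Fin k → ℝ) (P dP ds : Fin r → Fin k → ℝ)
    (Z : Fin r → Fin k → Fin k → ℝ) (R : Fin k → Fin m' → ℝ) (LuA : Fin m' → ℝ) :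
    (∑ α, ∑ A, s α * R α A * LuA A)
    + (∑ a, ∑ α, (ds a α + ∑ β, Z a α β * s β) * P a α)
    = -(∑ α, s α * ((∑ a, dP a α) - (∑ a, ∑ γ, Z a γ α * P a γ) - ∑ A, R α A * LuA A))
      + ∑ a, ∑ α, (ds a α * P a α + s α * dP a α) := by
  classical
  have e1 : ∑ α, ∑ A, s α * R α A * LuA A = ∑ α, s α * ∑ A, R α A * LuA A := by
    refine Finset.sum_congr rfl fun α _ => ?_
    rw [Finset.mul_sum]
    exact Finset.sum_congr rfl fun A _ => (mul_assoc _ _ _)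
  have e2 : ∑ a, ∑ α, (ds a α + ∑ β, Z a α β * s β) * P a α
      = (∑ a, ∑ α, ds a α * P a α) + ∑ α, s α * ∑ a, ∑ γ, Z a γ α * P a γ := by
    have h : ∀ a, ∑ α, (ds a α + ∑ β, Z a α β * s β) * P a α
        = (∑ α, ds a α * P a α) + ∑ α, (∑ β, Z a α β * s β) * P a α := by
      intro a
      rw [← Finset.sum_add_distrib]
      exact Finset.sum_congr rfl fun α _ => add_mul _ _ _
    rw [Finset.sum_congr rfl fun a _ => h a, Finset.sum_add_distrib]
    congr 1
    calc ∑ a, ∑ α, (∑ β, Z a α β * s β) * P a α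
        = ∑ a, ∑ α, ∑ β, s β * (Z a α β * P a α) := by
          refine Finset.sum_congr rfl fun a _ => Finset.sum_congr rfl fun α _ => ?_
          rw [Finset.sum_mul]
          exact Finset.sum_congr rfl fun β _ => by ring
      _ = ∑ a, ∑ β, ∑ α, s β * (Z a α β * P a α) :=
          Finset.sum_congr rfl fun a _ => Finset.sum_comm
      _ = ∑ β, ∑ a, ∑ α, s β * (Z a α β * P a α) := Finset.sum_comm
      _ = ∑ β, s β * ∑ a, ∑ γ, Z a γ β * P a γ := by
          refine Finset.sum_congr rfl fun β _ => ?_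
          rw [Finset.mul_sum]
          exact Finset.sum_congr rfl fun a _ => (Finset.mul_sum _ _ _).symm
  have e3 : ∑ a, ∑ α, (ds a α * P a α + s α * dP a α)
      = (∑ a, ∑ α, ds a α * P a α) + ∑ α, s α * ∑ a, dP a α := by
    calc ∑ a, ∑ α, (ds a α * P a α + s α * dP a α)
        = ∑ a, ((∑ α, ds a α * P a α) + ∑ α, s α * dP a α) :=
          Finset.sum_congr rfl fun a _ => Finset.sum_add_distrib
      _ = (∑ a, ∑ α, ds a α * P a α) + ∑ a, ∑ α, s α * dP a α := Finset.sum_add_distrib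
      _ = (∑ a, ∑ α, ds a α * P a α) + ∑ α, s α * ∑ a, dP a α := by
          congr 1
          rw [Finset.sum_comm]
          exact Finset.sum_congr rfl fun α _ => (Finset.mul_sum _ _ _).symm
  rw [e1, e2, e3]
  simp only [mul_sub]
  rw [Finset.sum_sub_distrib, Finset.sum_sub_distrib]
  ring

/-- First variation identity (the computational core of the Euler–Lagrange
theorem) for a Lagrangian field theory on a Lie algebroid over `F = TN`,
`N = ℝ^r`, in coordinates: for every smooth vertical section `σ` and every `x`,
`Σ_{α,A} σ^α ρ_α^A ∂L/∂u^A + Σ_{a,α} (σ^α_{|a} + Σ_β Z^α_{aβ} σ^β) p_a^α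
  = − Σ_α σ^α δL_α + Σ_a ∂/∂x^a (Σ_α σ^α p_a^α)`. -/
theorem first_variation_identity {r m k : ℕ} (hr : 1 ≤ r) (hm : 1 ≤ m) (hk : 1 ≤ k)
    (ρa : Fin r → Fin m → (Fin r → ℝ) → (Fin m → ℝ) → ℝ)
    (ρk : Fin k → Fin m → (Fin r → ℝ) → (Fin m → ℝ) → ℝ)
    (Ca : Fin r → Fin k → Fin k → (Fin r → ℝ) → (Fin m → ℝ) → ℝ)
    (Cc : Fin k → Fin k → Fin k → (Fin r → ℝ) → (Fin m → ℝ) → ℝ)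
    (L : (Fin r → ℝ) → (Fin m → ℝ) → (Fin r → Fin k → ℝ) → ℝ)
    (u : (Fin r → ℝ) → Fin m → ℝ) (y : (Fin r → ℝ) → Fin r → Fin k → ℝ)
    (hρa : ∀ a A, ContDiff ℝ (⊤ : ℕ∞) (fun q : (Fin r → ℝ) × (Fin m → ℝ) => ρa a A q.1 q.2))
    (hρk : ∀ α A, ContDiff ℝ (⊤ : ℕ∞) (fun q : (Fin r → ℝ) × (Fin m → ℝ) => ρk α A q.1 q.2))
    (hCa : ∀ a α β, ContDiff ℝ (⊤ : ℕ∞) (fun q : (Fin r → ℝ) × (Fin m → ℝ) => Ca a α β q.1 q.2))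
    (hCc : ∀ α β γ, ContDiff ℝ (⊤ : ℕ∞) (fun q : (Fin r → ℝ) × (Fin m → ℝ) => Cc α β γ q.1 q.2))
    (hL : ContDiff ℝ (⊤ : ℕ∞)
      (fun q : (Fin r → ℝ) × (Fin m → ℝ) × (Fin r → Fin k → ℝ) => L q.1 q.2.1 q.2.2))
    (hu : ContDiff ℝ (⊤ : ℕ∞) u) (hy : ContDiff ℝ (⊤ : ℕ∞) y)
    (adm : ∀ (x : Fin r → ℝ) (a : Fin r) (A : Fin m),
      pd (fun x' => u x' A) x a = ρa a A x (u x) + ∑ α, ρk α A x (u x) * y x a α)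
    (σ : (Fin r → ℝ) → (Fin m → ℝ) → Fin k → ℝ)
    (hσ : ContDiff ℝ (⊤ : ℕ∞) (fun q : (Fin r → ℝ) × (Fin m → ℝ) => σ q.1 q.2)) :
    ∀ x : Fin r → ℝ,
      (∑ α, ∑ A, σ x (u x) α * ρk α A x (u x) * Lu L u y A x)
      + (∑ a, ∑ α,
          (sigmaTD ρa ρk σ u y a α x + ∑ β, Zaff Ca Cc a α β x (u x) (y x) * σ x (u x) β)
            * momentum L u y a α x)
      = - (∑ α, σ x (u x) α * deltaL ρk Ca Cc L u y α x)
        + ∑ a, pd (fun x' => ∑ α, σ x' (u x') α * momentum L u y a α x') x a := by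
  classical
  intro x
  -- each component of σ is smooth
  have hσα : ∀ α : Fin k, ContDiff ℝ (⊤ : ℕ∞)
      (fun q : (Fin r → ℝ) × (Fin m → ℝ) => σ q.1 q.2 α) := fun α => contDiff_pi.1 hσ α
  -- the total derivative of σ along the admissible field is the honest derivative
  have hTD : ∀ (a : Fin r) (α : Fin k),
      sigmaTD ρa ρk σ u y a α x = pd (fun x' => σ x' (u x') α) x a := by
    intro a α
    have key : pd (fun x' => σ x' (u x') α) x a
        = pd (fun x' => σ x' (u x) α) x a
          + ∑ A, pd (fun x' => u x' A) x a * pd (fun v => σ x v α) (u x) A :=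
      pd_comp_chain (fun q => σ q.1 q.2 α) (hσα α) u hu x a
    rw [key, sigmaTD]
    congr 1
    refine Finset.sum_congr rfl fun A _ => ?_
    rw [adm x a A]
  -- Leibniz rule for the divergence term
  have hprod : ∀ a : Fin r,
      pd (fun x' => ∑ α, σ x' (u x') α * momentum L u y a α x') x a
        = ∑ α, (pd (fun x' => σ x' (u x') α) x a * momentum L u y a α x
            + σ x (u x) α * pd (fun x' => momentum L u y a α x') x a) := fun a =>
    pd_sum_mul (fun α x' => σ x' (u x') α) (fun α x' => momentum L u y a α x') x a
      (fun α => (((hσα α).comp (contDiff_id.prodMk hu)).differentiable (by simp) x))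
      (fun α => ((momentum_contDiff L hL u y hu hy a α).differentiable (by simp) x))
  simp only [deltaL, hTD, hprod]
  exact alg_identity (fun α => σ x (u x) α)
    (fun a α => momentum L u y a α x)
    (fun a α => pd (fun x' => momentum L u y a α x') x a)
    (fun a α => pd (fun x' => σ x' (u x') α) x a)
    (fun a α β => Zaff Ca Cc a α β x (u x) (y x))
    (fun α A => ρk α A x (u x)) (fun A => Lu L u y A x)
end

section
/- Chern–Simons factorization identity: for every α ∈ {1,…,k} and every x ∈ ℝ³, Σ_a ∂p_a^α/∂x^a (x) − Σ_{a,β,γ} p_a^γ(x) C_{γβα} y_a^β(x) = Σ_{β,γ} C_{αβγ} [ ( ∂₁y₂^β − ∂₂y₁^β − Σ_{μ,ν} C_{βμν} y₁^μ y₂^ν ) y₃^γ + ( ∂₃y₁^β − ∂₁y₃^β − Σ_{μ,ν} C_{βμν} y₃^μ y₁^ν ) y₂^γ + ( ∂₂y₃^β − ∂₃y₂^β − Σ_{μ,ν} C_{βμν} y₂^μ y₃^ν ) y₁^γ ] (x), where ∂_b denotes ∂/∂x^b and all fields are evaluated at x. In other words, the Euler–Lagrange expression of the Chern–Simons Lagrangian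 is a combination of the morphism (flatness) conditions. -/
private lemma cs_fderiv_double_sum {k : ℕ} (c : Fin k → Fin k → ℝ)
    (f g : Fin k → (Fin 3 → ℝ) → ℝ) (x v : Fin 3 → ℝ)
    (hf : ∀ β, DifferentiableAt ℝ (f β) x) (hg : ∀ γ, DifferentiableAt ℝ (g γ) x) :
    fderiv ℝ (fun x' => ∑ β, ∑ γ, c β γ * f β x' * g γ x') x v
      = ∑ β, ∑ γ, c β γ * (fderiv ℝ (f β) x v * g γ x + f β x * fderiv ℝ (g γ) x v) := by
  have hterm : ∀ β γ, fderiv ℝ (fun x' => c β γ * f β x' * g γ x') x v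
      = c β γ * (fderiv ℝ (f β) x v * g γ x + f β x * fderiv ℝ (g γ) x v) := by
    intro β γ
    have h1 : HasFDerivAt (fun x' => c β γ * f β x') (c β γ • fderiv ℝ (f β) x) x :=
      (hf β).hasFDerivAt.const_mul _
    have h3 := h1.mul (hg γ).hasFDerivAt
    rw [show (fun x' => c β γ * f β x' * g γ x') = (fun x' => c β γ * f β x') * g γ from rfl,
      h3.fderiv]
    simp [smul_eq_mul]
    ring
  have hd : ∀ β γ, DifferentiableAt ℝ (fun x' => c β γ * f β x' * g γ x') x :=
    fun β γ => (((hf β).const_mul _).mul (hg γ))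
  rw [fderiv_fun_sum (fun β _ => DifferentiableAt.fun_sum (fun γ _ => hd β γ)),
    ContinuousLinearMap.sum_apply]
  refine Finset.sum_congr rfl fun β _ => ?_
  rw [fderiv_fun_sum (fun γ _ => hd β γ), ContinuousLinearMap.sum_apply]
  exact Finset.sum_congr rfl fun γ _ => hterm β γ

private lemma cs_sum_antisym {k : ℕ} (G : Fin k → Fin k → ℝ)
    (h : ∀ b c, G b c + G c b = 0) : ∑ b, ∑ c, G b c = 0 := by
  have hs : ∑ b, ∑ c, G b c = ∑ b, ∑ c, G c b := Finset.sum_comm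
  have h2 : (∑ b, ∑ c, G b c) + (∑ b, ∑ c, G b c) = 0 := by
    nth_rewrite 2 [hs]
    rw [← Finset.sum_add_distrib]
    simp only [← Finset.sum_add_distrib, h, Finset.sum_const_zero]
  linarith


/-- The Chern–Simons momenta: for fields `y a α : ℝ³ → ℝ` and structure constants
`C α β γ = C_{αβγ}`, the momenta are
`p₁^α = Σ C_{αβγ} y₂^β y₃^γ`, `p₂^α = Σ C_{βαγ} y₁^β y₃^γ`,
`p₃^α = Σ C_{βγα} y₁^β y₂^γ` (indices of `Fin 3` shifted to `0,1,2`). -/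
def csMomentum {k : ℕ} (C : Fin k → Fin k → Fin k → ℝ)
    (y : (Fin 3 → ℝ) → Fin 3 → Fin k → ℝ) (a : Fin 3) (α : Fin k)
    (x : Fin 3 → ℝ) : ℝ :=
  if a = 0 then ∑ β, ∑ γ, C α β γ * y x 1 β * y x 2 γ
  else if a = 1 then ∑ β, ∑ γ, C β α γ * y x 0 β * y x 2 γ
  else ∑ β, ∑ γ, C β γ α * y x 0 β * y x 1 γ

/-- Chern–Simons factorization identity: the Euler–Lagrange expression of the
Chern–Simons Lagrangian `L = Σ C_{αβγ} y₁^α y₂^β y₃^γ` is a combination of the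
morphism (flatness) conditions.  Here `C` is antisymmetric in every pair of
indices and the fields `y_a^α : ℝ³ → ℝ` are smooth. -/
theorem chern_simons_factorization {k : ℕ} (hk : 1 ≤ k)
    (C : Fin k → Fin k → Fin k → ℝ)
    (hC1 : ∀ α β γ, C α β γ = - C β α γ)
    (hC2 : ∀ α β γ, C α β γ = - C α γ β)
    (y : (Fin 3 → ℝ) → Fin 3 → Fin k → ℝ)
    (hy : ∀ (a : Fin 3) (α : Fin k), ContDiff ℝ (⊤ : ℕ∞) (fun x => y x a α)) :
    ∀ (α : Fin k) (x : Fin 3 → ℝ),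
      (∑ a, fderiv ℝ (fun x' => csMomentum C y a α x') x (Pi.single a 1))
      - (∑ a, ∑ β, ∑ γ, csMomentum C y a γ x * C γ β α * y x a β)
      = ∑ β, ∑ γ, C α β γ *
        ( (fderiv ℝ (fun x' => y x' 1 β) x (Pi.single 0 1)
            - fderiv ℝ (fun x' => y x' 0 β) x (Pi.single 1 1)
            - ∑ μ, ∑ ν, C β μ ν * y x 0 μ * y x 1 ν) * y x 2 γ
        + (fderiv ℝ (fun x' => y x' 0 β) x (Pi.single 2 1)
            - fderiv ℝ (fun x' => y x' 2 β) x (Pi.single 0 1)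
            - ∑ μ, ∑ ν, C β μ ν * y x 2 μ * y x 0 ν) * y x 1 γ
        + (fderiv ℝ (fun x' => y x' 2 β) x (Pi.single 1 1)
            - fderiv ℝ (fun x' => y x' 1 β) x (Pi.single 2 1)
            - ∑ μ, ∑ ν, C β μ ν * y x 1 μ * y x 2 ν) * y x 0 γ ) := by
  intro α x
  have hyd : ∀ (a : Fin 3) (β : Fin k), DifferentiableAt ℝ (fun x' => y x' a β) x :=
    fun a β => ((hy a β).differentiable (by simp)).differentiableAt
  have cs0 : ∀ (α' : Fin k) (x' : Fin 3 → ℝ),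
      csMomentum C y 0 α' x' = ∑ β, ∑ γ, C α' β γ * y x' 1 β * y x' 2 γ := fun _ _ => rfl
  have cs1 : ∀ (α' : Fin k) (x' : Fin 3 → ℝ),
      csMomentum C y 1 α' x' = ∑ β, ∑ γ, C β α' γ * y x' 0 β * y x' 2 γ := fun _ _ => rfl
  have cs2 : ∀ (α' : Fin k) (x' : Fin 3 → ℝ),
      csMomentum C y 2 α' x' = ∑ β, ∑ γ, C β γ α' * y x' 0 β * y x' 1 γ := fun _ _ => rfl
  rw [Fin.sum_univ_three, Fin.sum_univ_three]
  simp only [cs0, cs1, cs2]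
  rw [cs_fderiv_double_sum (fun β γ => C α β γ) (fun β x' => y x' 1 β) (fun γ x' => y x' 2 γ)
        x (Pi.single 0 1) (fun β => hyd 1 β) (fun γ => hyd 2 γ),
      cs_fderiv_double_sum (fun β γ => C β α γ) (fun β x' => y x' 0 β) (fun γ x' => y x' 2 γ)
        x (Pi.single 1 1) (fun β => hyd 0 β) (fun γ => hyd 2 γ),
      cs_fderiv_double_sum (fun β γ => C β γ α) (fun β x' => y x' 0 β) (fun γ x' => y x' 1 γ)
        x (Pi.single 2 1) (fun β => hyd 0 β) (fun γ => hyd 1 γ)]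
  rw [← sub_eq_zero]
  simp only [← Finset.sum_sub_distrib, ← Finset.sum_add_distrib]
  apply cs_sum_antisym
  intro β γ
  have hcyc : ∀ a b c, C a b c = C b c a := fun a b c => by linarith [hC1 a b c, hC2 b a c]
  have hA1 : C β α γ = -C α β γ := by linarith [hC1 α β γ]
  have hA2 : C β γ α = C α β γ := by linarith [hC2 β γ α, hC1 α β γ]
  have hA3 : C γ β α = -C α β γ := by linarith [hC2 γ β α, hC1 γ α β, hC2 α γ β]
  have hA4 : C α γ β = -C α β γ := by linarith [hC2 α β γ]
  have hA5 : C γ α β = C α β γ := by linarith [hC1 γ α β, hC2 α γ β]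
  have q1 : (∑ μ, ∑ ν, C μ ν γ * y x 0 μ * y x 1 ν)
      = ∑ μ, ∑ ν, C γ μ ν * y x 0 μ * y x 1 ν := by
    refine Finset.sum_congr rfl fun μ _ => Finset.sum_congr rfl fun ν _ => ?_
    rw [hcyc μ ν γ, hcyc ν γ μ]
  have q2 : (∑ μ, ∑ ν, C μ ν β * y x 0 μ * y x 1 ν)
      = ∑ μ, ∑ ν, C β μ ν * y x 0 μ * y x 1 ν := by
    refine Finset.sum_congr rfl fun μ _ => Finset.sum_congr rfl fun ν _ => ?_
    rw [hcyc μ ν β, hcyc ν β μ]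
  have q3 : (∑ μ, ∑ ν, C μ γ ν * y x 0 μ * y x 2 ν)
      = ∑ μ, ∑ ν, C γ μ ν * y x 2 μ * y x 0 ν := by
    rw [Finset.sum_comm]
    refine Finset.sum_congr rfl fun a _ => Finset.sum_congr rfl fun b _ => ?_
    rw [hcyc b γ a]; ring
  have q4 : (∑ μ, ∑ ν, C μ β ν * y x 0 μ * y x 2 ν)
      = ∑ μ, ∑ ν, C β μ ν * y x 2 μ * y x 0 ν := by
    rw [Finset.sum_comm]
    refine Finset.sum_congr rfl fun a _ => Finset.sum_congr rfl fun b _ => ?_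
    rw [hcyc b β a]; ring
  rw [q1, q2, q3, q4, hA1, hA2, hA3, hA4, hA5]
  ring
end

section
/- The Chern–Simons Euler–Lagrange equations hold identically on morphisms: if the fields satisfy the flatness (Lie algebroid morphism) conditions ∂_a y_b^β − ∂_b y_a^β − Σ_{μ,ν} C_{βμν} y_a^μ y_b^ν = 0 for all a, b ∈ {1,2,3}, β ∈ {1,…,k} and all x ∈ ℝ³, then for every α and every x ∈ ℝ³ the Euler–Lagrange equations hold: Σ_a ∂p_a^α/∂x^a (x) = Σ_{a,β,γ} p_a^γ(x) C_{γβα} y_a^β(x). -/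
/-- Derivative of a double sum of products. -/
lemma fderiv_double_sum {k : ℕ} (c : Fin k → Fin k → ℝ)
    (f g : (Fin 3 → ℝ) → Fin k → ℝ) (x v : Fin 3 → ℝ)
    (hf : ∀ β, DifferentiableAt ℝ (fun x => f x β) x)
    (hg : ∀ γ, DifferentiableAt ℝ (fun x => g x γ) x) :
    fderiv ℝ (fun x => ∑ β, ∑ γ, c β γ * f x β * g x γ) x v
      = ∑ β, ∑ γ, c β γ * (fderiv ℝ (fun x => f x β) x v * g x γ
          + f x β * fderiv ℝ (fun x => g x γ) x v) := by
  have hβγ : ∀ β γ : Fin k, DifferentiableAt ℝ (fun x => c β γ * f x β * g x γ) x :=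
    fun β γ => ((hf β).const_mul _).mul (hg γ)
  have hβ : ∀ β, DifferentiableAt ℝ (fun x => ∑ γ, c β γ * f x β * g x γ) x :=
    fun β => DifferentiableAt.fun_sum (fun γ _ => hβγ β γ)
  rw [fderiv_fun_sum (fun β _ => hβ β)]
  rw [ContinuousLinearMap.sum_apply]
  refine Finset.sum_congr rfl (fun β _ => ?_)
  rw [fderiv_fun_sum (fun γ _ => hβγ β γ), ContinuousLinearMap.sum_apply]
  refine Finset.sum_congr rfl (fun γ _ => ?_)
  rw [fderiv_fun_mul ((hf β).const_mul _) (hg γ)]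
  rw [fderiv_const_mul (hf β)]
  simp [ContinuousLinearMap.add_apply, ContinuousLinearMap.smul_apply]
  ring

/-- A double sum of a skew-symmetric summand vanishes. -/
lemma sum_skew {k : ℕ} (H : Fin k → Fin k → ℝ) (h : ∀ β γ, H β γ + H γ β = 0) :
    ∑ β, ∑ γ, H β γ = 0 := by
  have h2 : ((∑ β, ∑ γ, H β γ) + ∑ β, ∑ γ, H γ β) = 0 := by
    rw [← Finset.sum_add_distrib]
    rw [show (fun β => (∑ γ, H β γ) + ∑ γ, H γ β) = fun β => ∑ γ, (H β γ + H γ β) by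
      funext β; rw [Finset.sum_add_distrib]]
    simp [h]
  have h3 : (∑ β, ∑ γ, H γ β) = ∑ β, ∑ γ, H β γ := Finset.sum_comm
  linarith

/-- The algebraic core of the Chern–Simons Euler–Lagrange computation. -/
lemma cs_key {k : ℕ} (C : Fin k → Fin k → Fin k → ℝ)
    (hC1 : ∀ α β γ, C α β γ = - C β α γ)
    (hC2 : ∀ α β γ, C α β γ = - C α γ β)
    (Y : Fin 3 → Fin k → ℝ) (D : Fin 3 → Fin 3 → Fin k → ℝ)
    (hF : ∀ a b β, D a b β - D b a β - ∑ μ, ∑ ν, C β μ ν * Y a μ * Y b ν = 0)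
    (α : Fin k) :
    (∑ β, ∑ γ, C α β γ * (D 0 1 β * Y 2 γ + Y 1 β * D 0 2 γ))
    + (∑ β, ∑ γ, C β α γ * (D 1 0 β * Y 2 γ + Y 0 β * D 1 2 γ))
    + (∑ β, ∑ γ, C β γ α * (D 2 0 β * Y 1 γ + Y 0 β * D 2 1 γ))
    = (∑ β, ∑ γ, (∑ μ, ∑ ν, C γ μ ν * Y 1 μ * Y 2 ν) * C γ β α * Y 0 β)
    + (∑ β, ∑ γ, (∑ μ, ∑ ν, C μ γ ν * Y 0 μ * Y 2 ν) * C γ β α * Y 1 β)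
    + (∑ β, ∑ γ, (∑ μ, ∑ ν, C μ ν γ * Y 0 μ * Y 1 ν) * C γ β α * Y 2 β) := by
  rw [← sub_eq_zero]
  have merge :
      ((∑ β, ∑ γ, C α β γ * (D 0 1 β * Y 2 γ + Y 1 β * D 0 2 γ))
      + (∑ β, ∑ γ, C β α γ * (D 1 0 β * Y 2 γ + Y 0 β * D 1 2 γ))
      + (∑ β, ∑ γ, C β γ α * (D 2 0 β * Y 1 γ + Y 0 β * D 2 1 γ)))
      - ((∑ β, ∑ γ, (∑ μ, ∑ ν, C γ μ ν * Y 1 μ * Y 2 ν) * C γ β α * Y 0 β)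
      + (∑ β, ∑ γ, (∑ μ, ∑ ν, C μ γ ν * Y 0 μ * Y 2 ν) * C γ β α * Y 1 β)
      + (∑ β, ∑ γ, (∑ μ, ∑ ν, C μ ν γ * Y 0 μ * Y 1 ν) * C γ β α * Y 2 β))
      = ∑ β, ∑ γ,
          (C α β γ * (D 0 1 β * Y 2 γ + Y 1 β * D 0 2 γ)
          + C β α γ * (D 1 0 β * Y 2 γ + Y 0 β * D 1 2 γ)
          + C β γ α * (D 2 0 β * Y 1 γ + Y 0 β * D 2 1 γ)
          - (∑ μ, ∑ ν, C γ μ ν * Y 1 μ * Y 2 ν) * C γ β α * Y 0 β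
          - (∑ μ, ∑ ν, C μ γ ν * Y 0 μ * Y 2 ν) * C γ β α * Y 1 β
          - (∑ μ, ∑ ν, C μ ν γ * Y 0 μ * Y 1 ν) * C γ β α * Y 2 β) := by
    simp only [Finset.sum_add_distrib, Finset.sum_sub_distrib]; ring
  rw [merge]
  apply sum_skew
  intro β γ
  have e01 : ∀ δ, D 0 1 δ = D 1 0 δ + ∑ μ, ∑ ν, C δ μ ν * Y 0 μ * Y 1 ν := by
    intro δ; have := hF 0 1 δ; linarith
  have e02 : ∀ δ, D 0 2 δ = D 2 0 δ + ∑ μ, ∑ ν, C δ μ ν * Y 0 μ * Y 2 ν := by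
    intro δ; have := hF 0 2 δ; linarith
  have e12 : ∀ δ, D 1 2 δ = D 2 1 δ + ∑ μ, ∑ ν, C δ μ ν * Y 1 μ * Y 2 ν := by
    intro δ; have := hF 1 2 δ; linarith
  have s2 : ∀ (δ : Fin k) (a b : Fin 3),
      (∑ μ, ∑ ν, C μ δ ν * Y a μ * Y b ν) = -∑ μ, ∑ ν, C δ μ ν * Y a μ * Y b ν := by
    intro δ a b
    rw [← Finset.sum_neg_distrib]
    refine Finset.sum_congr rfl (fun μ _ => ?_)
    rw [← Finset.sum_neg_distrib]
    refine Finset.sum_congr rfl (fun ν _ => ?_)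
    linear_combination (Y a μ * Y b ν) * hC1 μ δ ν
  have s3 : ∀ (δ : Fin k) (a b : Fin 3),
      (∑ μ, ∑ ν, C μ ν δ * Y a μ * Y b ν) = ∑ μ, ∑ ν, C δ μ ν * Y a μ * Y b ν := by
    intro δ a b
    refine Finset.sum_congr rfl (fun μ _ => ?_)
    refine Finset.sum_congr rfl (fun ν _ => ?_)
    have : C μ ν δ = C δ μ ν := by
      linear_combination hC1 μ ν δ - hC2 ν μ δ + hC1 ν δ μ - hC2 δ ν μ
    linear_combination (Y a μ * Y b ν) * this
  have hβγα : C β γ α = C α β γ := by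
    linear_combination hC1 β γ α - hC2 γ β α + hC1 γ α β - hC2 α γ β
  have hγβα : C γ β α = -C α β γ := by linear_combination hC1 γ β α - hβγα
  have hγαβ : C γ α β = C α β γ := by
    linear_combination hC1 γ α β - hC2 α γ β + hC1 α β γ - hC2 β α γ + hβγα
  simp only [e01, e02, e12, s2, s3, hC1 β α γ, hβγα, hγβα, hC2 α γ β, hγαβ]
  ring

lemma csM0 {k : ℕ} (C : Fin k → Fin k → Fin k → ℝ)
    (y : (Fin 3 → ℝ) → Fin 3 → Fin k → ℝ) (α : Fin k) (x : Fin 3 → ℝ) :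
    csMomentum C y 0 α x = ∑ β, ∑ γ, C α β γ * y x 1 β * y x 2 γ := by
  simp [csMomentum]

lemma csM1 {k : ℕ} (C : Fin k → Fin k → Fin k → ℝ)
    (y : (Fin 3 → ℝ) → Fin 3 → Fin k → ℝ) (α : Fin k) (x : Fin 3 → ℝ) :
    csMomentum C y 1 α x = ∑ β, ∑ γ, C β α γ * y x 0 β * y x 2 γ := by
  simp [csMomentum]

lemma csM2 {k : ℕ} (C : Fin k → Fin k → Fin k → ℝ)
    (y : (Fin 3 → ℝ) → Fin 3 → Fin k → ℝ) (α : Fin k) (x : Fin 3 → ℝ) :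
    csMomentum C y 2 α x = ∑ β, ∑ γ, C β γ α * y x 0 β * y x 1 γ := by
  simp [csMomentum]

/-- The Chern–Simons Euler–Lagrange equations hold identically on morphisms:
if the smooth fields `y_a^α : ℝ³ → ℝ` satisfy the flatness (Lie algebroid
morphism) conditions
`∂_a y_b^β − ∂_b y_a^β − Σ_{μ,ν} C_{βμν} y_a^μ y_b^ν = 0`,
then the Euler–Lagrange equations
`Σ_a ∂_a p_a^α = Σ_{a,β,γ} p_a^γ C_{γβα} y_a^β` hold. -/
theorem chern_simons_el_on_morphisms {k : ℕ} (hk : 1 ≤ k)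
    (C : Fin k → Fin k → Fin k → ℝ)
    (hC1 : ∀ α β γ, C α β γ = - C β α γ)
    (hC2 : ∀ α β γ, C α β γ = - C α γ β)
    (y : (Fin 3 → ℝ) → Fin 3 → Fin k → ℝ)
    (hy : ∀ (a : Fin 3) (α : Fin k), ContDiff ℝ (⊤ : ℕ∞) (fun x => y x a α))
    (flat : ∀ (a b : Fin 3) (β : Fin k) (x : Fin 3 → ℝ),
      fderiv ℝ (fun x' => y x' b β) x (Pi.single a 1)
      - fderiv ℝ (fun x' => y x' a β) x (Pi.single b 1)
      - ∑ μ, ∑ ν, C β μ ν * y x a μ * y x b ν = 0) :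
    ∀ (α : Fin k) (x : Fin 3 → ℝ),
      (∑ a, fderiv ℝ (fun x' => csMomentum C y a α x') x (Pi.single a 1))
      = ∑ a, ∑ β, ∑ γ, csMomentum C y a γ x * C γ β α * y x a β := by
  intro α x
  have hd : ∀ (a : Fin 3) (δ : Fin k), DifferentiableAt ℝ (fun x' => y x' a δ) x :=
    fun a δ => ((hy a δ).differentiable (by simp)).differentiableAt
  have h0 : fderiv ℝ (fun x' => ∑ β, ∑ γ, C α β γ * y x' 1 β * y x' 2 γ) x (Pi.single 0 1)
      = ∑ β, ∑ γ, C α β γ * (fderiv ℝ (fun x' => y x' 1 β) x (Pi.single 0 1) * y x 2 γ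
          + y x 1 β * fderiv ℝ (fun x' => y x' 2 γ) x (Pi.single 0 1)) :=
    fderiv_double_sum (fun β γ => C α β γ) (fun x' β => y x' 1 β) (fun x' γ => y x' 2 γ)
      x (Pi.single 0 1) (fun β => hd 1 β) (fun γ => hd 2 γ)
  have h1 : fderiv ℝ (fun x' => ∑ β, ∑ γ, C β α γ * y x' 0 β * y x' 2 γ) x (Pi.single 1 1)
      = ∑ β, ∑ γ, C β α γ * (fderiv ℝ (fun x' => y x' 0 β) x (Pi.single 1 1) * y x 2 γ
          + y x 0 β * fderiv ℝ (fun x' => y x' 2 γ) x (Pi.single 1 1)) :=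
    fderiv_double_sum (fun β γ => C β α γ) (fun x' β => y x' 0 β) (fun x' γ => y x' 2 γ)
      x (Pi.single 1 1) (fun β => hd 0 β) (fun γ => hd 2 γ)
  have h2 : fderiv ℝ (fun x' => ∑ β, ∑ γ, C β γ α * y x' 0 β * y x' 1 γ) x (Pi.single 2 1)
      = ∑ β, ∑ γ, C β γ α * (fderiv ℝ (fun x' => y x' 0 β) x (Pi.single 2 1) * y x 1 γ
          + y x 0 β * fderiv ℝ (fun x' => y x' 1 γ) x (Pi.single 2 1)) :=
    fderiv_double_sum (fun β γ => C β γ α) (fun x' β => y x' 0 β) (fun x' γ => y x' 1 γ)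
      x (Pi.single 2 1) (fun β => hd 0 β) (fun γ => hd 1 γ)
  simp only [Fin.sum_univ_three, csM0, csM1, csM2]
  rw [h0, h1, h2]
  exact cs_key C hC1 hC2 (fun a δ => y x a δ)
    (fun a b δ => fderiv ℝ (fun x' => y x' b δ) x (Pi.single a 1))
    (fun a b δ => flat a b δ x) α
end
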